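/- Let W = (𝒫, n) be a well-defined Wilson loop diagram with V_𝒫 = Fin n, let P ⊆ 𝒫, and let M be the matroid M(W). Let M' be the matroid on ground set V_{𝒫∖P} = Fin n ∖ F(P) whose independent sets are exactly the sets S ⊆ V_{𝒫∖P} such that |U| ≤ |{q ∈ 𝒫∖P : V_q ∩ U ≠ ∅}| for every U ⊆ S (the matroid M(W/P) of the contracted diagram W/P = (𝒫∖P, V_{𝒫∖P})). Then the contraction M / F(P) equals M' if and only if the rank of F(P) in M equals |P|. -/

import Mathlib

open Matroid Set

/-- The support of a propagator: its two endpoints and their cyclic successors. -/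
def Vp (n : ℕ) [NeZero n] (p : Fin n × Fin n) : Set (Fin n) :=
  {p.1, p.1 + 1, p.2, p.2 + 1}

/-- The support of a set of propagators. -/
def VP (n : ℕ) [NeZero n] (P : Set (Fin n × Fin n)) : Set (Fin n) :=
  ⋃ p ∈ P, Vp n p

/-- `propsOf n Ps S` is `Prop(S)`: the propagators of `Ps` whose support meets `S`. -/
def propsOf (n : ℕ) [NeZero n] (Ps : Set (Fin n × Fin n)) (S : Set (Fin n)) :
    Set (Fin n × Fin n) :=
  {p ∈ Ps | (Vp n p ∩ S).Nonempty}

/-- A Wilson loop diagram `(Ps, n)` is well defined if `|V_P| ≥ |P| + 3`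
for every nonempty `P ⊆ Ps`. -/
def WellDefinedWLD (n : ℕ) [NeZero n] (Ps : Set (Fin n × Fin n)) : Prop :=
  ∀ P ⊆ Ps, P.Nonempty → P.ncard + 3 ≤ (VP n P).ncard
/-- A circuit of a matroid: a minimal dependent set. -/
def Matroid.IsCircuitOf {α : Type*} (M : Matroid α) (C : Set α) : Prop :=
  M.Dep C ∧ ∀ D ⊂ C, ¬ M.Dep D

/-- A union of circuits (a cyclic set) of a matroid. -/
def Matroid.UnionOfCircuits {α : Type*} (M : Matroid α) (C : Set α) : Prop :=
  ∃ 𝒞 : Set (Set α), (∀ D ∈ 𝒞, M.IsCircuitOf D) ∧ C = ⋃₀ 𝒞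

/-- A matroid is connected if its ground set is nonempty and any two elements of the
ground set are equal or lie on a common circuit. -/
def Matroid.Conn {α : Type*} (M : Matroid α) : Prop :=
  M.E.Nonempty ∧ ∀ x ∈ M.E, ∀ y ∈ M.E, x = y ∨ ∃ C, M.IsCircuitOf C ∧ x ∈ C ∧ y ∈ C

/-- The rank of a set in a matroid: the maximal size of an independent subset. -/
noncomputable def Matroid.rk' {α : Type*} (M : Matroid α) (X : Set α) : ℕ :=
  sSup (Set.ncard '' {I | M.Indep I ∧ I ⊆ X})

/-- Contraction of a matroid by a set, defined via duality. -/
def Matroid.contractBy {α : Type*} (M : Matroid α) (C : Set α) : Matroid α :=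
  (M✶ ↾ (M.E \ C))✶

/-- The propagator flat `F(P)`: vertices supporting only propagators in `P`. -/
def FP (n : ℕ) [NeZero n] (Ps P : Set (Fin n × Fin n)) : Set (Fin n) :=
  VP n P \ VP n (Ps \ P)

/-! `M(W)` is the transversal matroid of the supports `V_p`, of rank `|𝒫|` by Hall's theorem.
A propagator whose support meets `F(P)` lies in `P`, so a basis `B` of `F(P)` has `|B| ≤ |P|`.
For `I` disjoint from `F(P)`, the propagators of `I ∪ B` are those of `I` in `𝒫 ∖ P`
together with at most `|P|` more, so when `|B| = |P|` the Hall condition for `I ∪ B` in `𝒫`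
is exactly the Hall condition for `I` in `𝒫 ∖ P`: the independent sets of `M / F(P)` and `M'`
agree.
Conversely, if `M / F(P) = M'` then `|𝒫| - rk F(P) = rk (M / F(P)) ≤ |𝒫 ∖ P|`. -/

namespace Matroid

variable {α : Type*} {M : Matroid α} {B C S : Set α}

lemma contractBy_eq_contract (M : Matroid α) (C : Set α) : M.contractBy C = M ／ C := rfl

lemma IsBasis.rk'_eq_ncard (hC : C.Finite) (hB : M.IsBasis B C) : M.rk' C = B.ncard := by
  refine IsGreatest.csSup_eq ⟨⟨B, ⟨hB.indep, hB.subset⟩, rfl⟩, ?_⟩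
  rintro _ ⟨I, ⟨hI, hIC⟩, rfl⟩
  obtain ⟨B', hB', hIB'⟩ := hI.subset_isBasis_of_subset hIC
  calc I.ncard ≤ B'.ncard := ncard_le_ncard hIB' (hC.subset hB'.subset)
    _ = B.ncard := by rw [ncard_def, ncard_def, hB'.encard_eq_encard hB]

/-- Extending `B` to a base `B₁` of `M`, the set `B₁ \ B` is independent in `M ／ C`. -/
lemma IsBasis.exists_contract_indep_ncard_le_add [M.RankFinite] (hB : M.IsBasis B C)
    (hS : M.Indep S) : ∃ J, (M ／ C).Indep J ∧ S.ncard ≤ J.ncard + B.ncard := by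
  obtain ⟨B₀, hB₀, hSB₀⟩ := hS.exists_isBase_superset
  obtain ⟨B₁, hB₁, hBB₁⟩ := hB.indep.exists_isBase_superset
  have hB₁C : B₁ ∩ C = B := (hB.eq_of_subset_indep (hB₁.indep.inter_right C)
    (subset_inter hBB₁ hB.subset) inter_subset_right).symm
  refine ⟨B₁ \ B, hB.contract_indep_iff.2 ⟨?_, ?_⟩, ?_⟩
  · rw [sdiff_union_of_subset hBB₁]
    exact hB₁.indep
  · rw [disjoint_iff_inter_eq_empty, inter_comm, sdiff_inter_right_comm, hB₁C, sdiff_self]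
  · calc S.ncard ≤ B₀.ncard := ncard_le_ncard hSB₀ hB₀.finite
      _ = B₁.ncard := hB₀.ncard_eq_ncard_of_isBase hB₁
      _ = (B₁ \ B).ncard + B.ncard := (ncard_sdiff_add_ncard_of_subset hBB₁ hB₁.finite).symm

end Matroid

section WilsonLoopDiagram

variable {n : ℕ} [NeZero n] {Ps Qs P : Set (Fin n × Fin n)} {S T : Set (Fin n)}

def SatisfiesHall (n : ℕ) [NeZero n] (Ps : Set (Fin n × Fin n)) (S : Set (Fin n)) : Prop :=
  ∀ U ⊆ S, U.ncard ≤ (propsOf n Ps U).ncard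

lemma VP_eq_VP_union_VP_diff (hP : P ⊆ Ps) : VP n Ps = VP n P ∪ VP n (Ps \ P) := by
  rw [VP, VP, VP, ← biUnion_union, union_sdiff_cancel hP]

lemma compl_FP (hP : P ⊆ Ps) (hcover : VP n Ps = univ) : (FP n Ps P)ᶜ = VP n (Ps \ P) := by
  ext x
  have hx : x ∈ VP n P ∪ VP n (Ps \ P) := by rw [← VP_eq_VP_union_VP_diff hP, hcover]; trivial
  simp only [FP, mem_compl_iff, mem_sdiff, not_and, not_not]
  exact ⟨fun h => hx.elim h id, fun h _ => h⟩

lemma propsOf_mono (hPs : Ps ⊆ Qs) (hST : S ⊆ T) : propsOf n Ps S ⊆ propsOf n Qs T :=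
  fun _ ⟨hp, hpS⟩ => ⟨hPs hp, hpS.mono (inter_subset_inter_right _ hST)⟩

lemma propsOf_union : propsOf n Ps (S ∪ T) = propsOf n Ps S ∪ propsOf n Ps T := by
  ext p
  simp [propsOf, inter_union_distrib_left, and_or_left]

lemma propsOf_subset_propsOf_diff_union (Ps P : Set (Fin n × Fin n)) (S : Set (Fin n)) :
    propsOf n Ps S ⊆ propsOf n (Ps \ P) S ∪ P := by
  intro p ⟨hp, hpS⟩
  by_cases hpP : p ∈ P
  exacts [Or.inr hpP, Or.inl ⟨⟨hp, hpP⟩, hpS⟩]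

lemma propsOf_diff_eq_empty_of_subset_FP (hS : S ⊆ FP n Ps P) : propsOf n (Ps \ P) S = ∅ :=
  eq_empty_of_forall_notMem fun _ ⟨hp, _, hxp, hxS⟩ => (hS hxS).2 (mem_biUnion hp hxp)

lemma propsOf_subset_of_subset_FP (hS : S ⊆ FP n Ps P) : propsOf n Ps S ⊆ P := by
  simpa [propsOf_diff_eq_empty_of_subset_FP hS] using
    propsOf_subset_propsOf_diff_union Ps P S

lemma SatisfiesHall.ncard_le (h : SatisfiesHall n Ps S) : S.ncard ≤ Ps.ncard :=
  (h S subset_rfl).trans (ncard_le_ncard fun _ hp => hp.1)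

lemma SatisfiesHall.ncard_le_of_subset_FP (h : SatisfiesHall n Ps S) (hS : S ⊆ FP n Ps P) :
    S.ncard ≤ P.ncard :=
  (h S subset_rfl).trans (ncard_le_ncard (propsOf_subset_of_subset_FP hS))

lemma SatisfiesHall.of_union_of_subset_FP (h : SatisfiesHall n Ps (S ∪ T))
    (hT : T ⊆ FP n Ps P) (hST : Disjoint S T) (hTP : P.ncard ≤ T.ncard) :
    SatisfiesHall n (Ps \ P) S := by
  intro U hU
  have hprops : propsOf n Ps (U ∪ T) ⊆ propsOf n (Ps \ P) U ∪ P := by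
    simpa [propsOf_union, propsOf_diff_eq_empty_of_subset_FP hT] using
      propsOf_subset_propsOf_diff_union Ps P (U ∪ T)
  have := calc U.ncard + T.ncard = (U ∪ T).ncard := (ncard_union_eq (hST.mono_left hU)).symm
    _ ≤ (propsOf n Ps (U ∪ T)).ncard := h _ (union_subset_union_left T hU)
    _ ≤ (propsOf n (Ps \ P) U ∪ P).ncard := ncard_le_ncard hprops
    _ ≤ (propsOf n (Ps \ P) U).ncard + P.ncard := ncard_union_le _ _
  omega

lemma SatisfiesHall.union_of_subset_FP (hS : SatisfiesHall n (Ps \ P) S)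
    (hT : SatisfiesHall n Ps T) (hSF : Disjoint S (FP n Ps P)) (hTF : T ⊆ FP n Ps P) :
    SatisfiesHall n Ps (S ∪ T) := by
  intro U hU
  set F := FP n Ps P
  have hUS : U \ F ⊆ S := fun x hx => (hU hx.1).resolve_right fun hxT => hx.2 (hTF hxT)
  have hUT : U ∩ F ⊆ T :=
    fun x hx => (hU hx.1).resolve_left fun hxS => hSF.notMem_of_mem_left hxS hx.2
  have hdisj : Disjoint (propsOf n (Ps \ P) (U \ F)) (propsOf n Ps (U ∩ F)) :=
    disjoint_left.2 fun p hp hp' => hp.1.2 (propsOf_subset_of_subset_FP inter_subset_right hp')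
  calc U.ncard = (U \ F).ncard + (U ∩ F).ncard := by
        rw [add_comm, ncard_inter_add_ncard_sdiff_eq_ncard]
    _ ≤ (propsOf n (Ps \ P) (U \ F)).ncard + (propsOf n Ps (U ∩ F)).ncard :=
        add_le_add (hS _ hUS) (hT _ hUT)
    _ = (propsOf n (Ps \ P) (U \ F) ∪ propsOf n Ps (U ∩ F)).ncard := (ncard_union_eq hdisj).symm
    _ ≤ (propsOf n Ps U).ncard := ncard_le_ncard (union_subset
        (propsOf_mono sdiff_subset sdiff_subset) (propsOf_mono subset_rfl inter_subset_left))

lemma exists_injective_mem_Vp (hW : WellDefinedWLD n Ps) :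
    ∃ f : Ps → Fin n, Function.Injective f ∧ ∀ p : Ps, f p ∈ Vp n p := by
  classical
  refine (Fintype.all_card_le_filter_rel_iff_exists_injective fun (p : Ps) x => x ∈ Vp n p).1
    fun A => ?_
  rcases A.eq_empty_or_nonempty with rfl | hA
  · simp
  have hVP : VP n (Subtype.val '' (A : Set Ps)) =
      ↑({x | ∃ p ∈ A, x ∈ Vp n p} : Finset (Fin n)) := by
    ext; simp [VP]
  have := hW _ image_val_subset ((Finset.coe_nonempty.2 hA).image _)
  rw [hVP, ncard_coe_finset, ncard_image_of_injective _ Subtype.val_injective,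
    ncard_coe_finset] at this
  omega

lemma satisfiesHall_range {f : Ps → Fin n} (hf : Function.Injective f)
    (hfV : ∀ p : Ps, f p ∈ Vp n p) : SatisfiesHall n Ps (range f) := by
  intro U hU
  calc U.ncard = (f ⁻¹' U).ncard := (ncard_preimage_of_injective_subset_range hf hU).symm
    _ = (Subtype.val '' (f ⁻¹' U)).ncard :=
        (ncard_image_of_injective _ Subtype.val_injective).symm
    _ ≤ (propsOf n Ps U).ncard := ncard_le_ncard (by
        rintro _ ⟨p, hp, rfl⟩
        exact ⟨p.2, f p, hfV p, hp⟩)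

lemma exists_satisfiesHall_ncard_eq (hW : WellDefinedWLD n Ps) :
    ∃ S, SatisfiesHall n Ps S ∧ S.ncard = Ps.ncard := by
  obtain ⟨f, hf, hfV⟩ := exists_injective_mem_Vp hW
  refine ⟨range f, satisfiesHall_range hf hfV, ?_⟩
  rw [← image_univ, ncard_image_of_injective _ hf, ncard_univ, Nat.card_coe_set_eq]

end WilsonLoopDiagram

/-- Let `W = (Ps, n)` be a well-defined Wilson loop diagram with
`V_Ps = Fin n`, `P ⊆ Ps`, `M = M(W)`, and let `M'` be the matroid of the contracted
diagram `W/P = (Ps \ P, V_{Ps \ P})`. Then `M / F(P) = M'` iff `rk F(P) = |P|`. -/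
theorem contraction_eq_contracted_diagram_iff_rank (n : ℕ) [NeZero n]
    (Ps : Set (Fin n × Fin n)) (hW : WellDefinedWLD n Ps) (hcover : VP n Ps = Set.univ)
    (P : Set (Fin n × Fin n)) (hP : P ⊆ Ps)
    (M : Matroid (Fin n)) (hME : M.E = Set.univ)
    (hMI : ∀ S : Set (Fin n), M.Indep S ↔ ∀ U ⊆ S, U.ncard ≤ (propsOf n Ps U).ncard)
    (M' : Matroid (Fin n)) (hM'E : M'.E = VP n (Ps \ P))
    (hM'I : ∀ S : Set (Fin n), M'.Indep S ↔ S ⊆ VP n (Ps \ P) ∧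
      ∀ U ⊆ S, U.ncard ≤ (propsOf n (Ps \ P) U).ncard) :
    M.contractBy (FP n Ps P) = M' ↔ M.rk' (FP n Ps P) = P.ncard := by
  set F := FP n Ps P
  have hMI : ∀ S, M.Indep S ↔ SatisfiesHall n Ps S := hMI
  have hM'I : ∀ S, M'.Indep S ↔ S ⊆ VP n (Ps \ P) ∧ SatisfiesHall n (Ps \ P) S := hM'I
  obtain ⟨B, hB⟩ := M.exists_isBasis F (hME ▸ subset_univ F)
  have hBP : B.ncard ≤ P.ncard := ((hMI B).1 hB.indep).ncard_le_of_subset_FP hB.subset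
  rw [contractBy_eq_contract, hB.rk'_eq_ncard (toFinite F)]
  constructor
  · rintro rfl
    obtain ⟨S, hS, hSPs⟩ := exists_satisfiesHall_ncard_eq hW
    obtain ⟨J, hJ, hSJ⟩ := hB.exists_contract_indep_ncard_le_add ((hMI S).2 hS)
    have hJPs : J.ncard ≤ (Ps \ P).ncard := ((hM'I J).1 hJ).2.ncard_le
    have hPs : (Ps \ P).ncard + P.ncard = Ps.ncard := ncard_sdiff_add_ncard_of_subset hP
    omega
  · intro hBP'
    refine ext_indep ?_ fun I _ => ?_
    · rw [contract_ground, hME, hM'E, ← compl_eq_univ_sdiff, compl_FP hP hcover]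
    rw [hB.contract_indep_iff, hMI, hM'I, ← compl_FP hP hcover, subset_compl_iff_disjoint_left,
      and_comm, disjoint_comm]
    refine and_congr_right fun hIF => ⟨fun h => ?_, fun h => ?_⟩
    · exact h.of_union_of_subset_FP hB.subset (hIF.mono_right hB.subset) hBP'.ge
    · exact h.union_of_subset_FP ((hMI B).1 hB.indep) hIF hB.subset
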